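/- Let m ≥ 1 and let C be a normalized symmetric conference matrix of order 4m+2. Let ε ∈ {1, −1} and let c be a complex number of absolute value 1 with Re(c) = (−1 + ε·√(4m+1))/(4m). Define the (4m+1)×(4m+1) matrix W, indexed by 2 ≤ i,j ≤ 4m+2 (i.e., the first row and column of C are discarded), by W_ii = 1, and for i ≠ j, W_ij = c if C_ij = 1 and W_ij = conj(c) if C_ij = −1. Then W is a complex Hadamard matrix of order 4m+1. -/

import Mathlib

open Matrix

/-- `H` is a complex Hadamard matrix: unimodular entries and `H Hᴴ = n • I`. -/
def IsCHadamard {n : Type*} [Fintype n] [DecidableEq n] (H : Matrix n n ℂ) : Prop :=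
  (∀ i j, ‖H i j‖ = 1) ∧
    H * H.conjTranspose = (Fintype.card n : ℂ) • 1

/-- `C` is a conference matrix of order `n`: zero diagonal, `±1` off the
diagonal, and `C Cᵀ = (n-1) I`. -/
def IsConference {n : ℕ} (C : Matrix (Fin n) (Fin n) ℝ) : Prop :=
  (∀ i, C i i = 0) ∧ (∀ i j, i ≠ j → C i j = 1 ∨ C i j = -1) ∧
    C * C.transpose = ((n : ℝ) - 1) • 1

/-- A conference matrix is normalized if all off-diagonal entries of its first
row and first column equal `1`. -/
def IsNormalizedConf {n : ℕ} [NeZero n] (C : Matrix (Fin n) (Fin n) ℝ) : Prop :=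
  ∀ j, j ≠ 0 → C 0 j = 1 ∧ C j 0 = 1

/-!
Write `c = x + iy`, let `S` be `C` without its first row and column, `J` the all-ones matrix and
`N = 4m + 1`. Then `W = (1 - x) I + x J + i y S`. Normalization and orthogonality of `C` give
`S J = J S = 0` and `S² = S Sᵀ = N I - J`, so with `x² + y² = 1`,
`W W* = (N - q) I + q J` where `q = (N - 1) x² + 2x - 1`.
The hypothesis on `Re c` says precisely that `x` is a root of `q`.
-/

open ComplexConjugate

namespace Matrix

variable {ι : Type*}

theorem mul_of_one_eq_zero_iff [Fintype ι] {R : Type*} [NonAssocSemiring R]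
    {A : Matrix ι ι R} : A * of 1 = 0 ↔ ∀ i, ∑ k, A i k = 0 := by
  constructor
  · intro h i
    simpa [mul_apply] using congrFun (congrFun h i) i
  · intro h
    ext i j
    simp [mul_apply, h]

variable [DecidableEq ι]

theorem mul_conjTranspose_eq_card_smul_one [Fintype ι] {T : Matrix ι ι ℂ} (hT : Tᴴ = T)
    (hTJ : T * of 1 = 0) (hTT : T * T = (Fintype.card ι : ℂ) • 1 - of 1) {c : ℂ}
    (hc : ‖c‖ = 1) (hre : (Fintype.card ι - 1) * c.re ^ 2 + 2 * c.re - 1 = 0) :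
    ((1 - c.re : ℂ) • 1 + (c.re : ℂ) • of 1 + (Complex.I * c.im) • T) *
      ((1 - c.re : ℂ) • 1 + (c.re : ℂ) • of 1 + (Complex.I * c.im) • T)ᴴ =
      (Fintype.card ι : ℂ) • 1 := by
  have hJ : (of 1 : Matrix ι ι ℂ)ᴴ = of 1 := by
    ext
    simp
  have hJT : of 1 * T = 0 := by
    simpa [conjTranspose_mul, hT, hJ] using congrArg conjTranspose hTJ
  have hJJ : (of 1 : Matrix ι ι ℂ) * of 1 = (Fintype.card ι : ℂ) • of 1 := by
    ext
    simp [mul_apply]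
  have hsq : (c.re : ℂ) ^ 2 + (c.im : ℂ) ^ 2 = 1 := by
    have h := Complex.sq_norm c
    rw [hc, Complex.normSq_apply] at h
    exact_mod_cast by linear_combination -h
  have hre' : ((Fintype.card ι : ℂ) - 1) * (c.re : ℂ) ^ 2 + 2 * c.re - 1 = 0 := by
    exact_mod_cast hre
  simp only [conjTranspose_add, conjTranspose_smul, conjTranspose_one, hT, hJ, add_mul, mul_add,
    Matrix.mul_smul, Matrix.smul_mul, one_mul, mul_one, hTJ, hJT, hTT, hJJ, smul_zero, add_zero]
  match_scalars <;>
    simp only [Complex.star_def, map_sub, map_one, map_mul, Complex.conj_ofReal, Complex.conj_I]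
  · linear_combination (Fintype.card ι : ℂ) * hsq - hre' -
      (Fintype.card ι * c.im ^ 2 : ℂ) * Complex.I_sq
  · linear_combination hre' + (c.im ^ 2 : ℂ) * Complex.I_sq - hsq
  · ring

noncomputable def ofSignPattern (S : Matrix ι ι ℝ) (c : ℂ) : Matrix ι ι ℂ :=
  of fun i j => if i = j then 1 else if S i j = 1 then c else conj c

theorem ofSignPattern_eq {S : Matrix ι ι ℝ} (hdiag : ∀ i, S i i = 0)
    (hoff : ∀ i j, i ≠ j → S i j = 1 ∨ S i j = -1) (c : ℂ) :
    S.ofSignPattern c =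
      (1 - c.re : ℂ) • 1 + (c.re : ℂ) • of 1 + (Complex.I * c.im) • S.map (↑) := by
  ext i j
  simp only [ofSignPattern, of_apply, Matrix.add_apply, Matrix.smul_apply, one_apply,
    Pi.one_apply, map_apply, smul_eq_mul]
  by_cases hij : i = j
  · subst hij
    simp [hdiag]
  rcases hoff i j hij with h | h
  · simp [hij, h, Complex.ext_iff]
  · norm_num [hij, h, Complex.ext_iff]

theorem isCHadamard_ofSignPattern [Fintype ι] {S : Matrix ι ι ℝ} (hS : Sᵀ = S)
    (hdiag : ∀ i, S i i = 0) (hoff : ∀ i j, i ≠ j → S i j = 1 ∨ S i j = -1)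
    (hSJ : S * of 1 = 0) (hSS : S * Sᵀ = (Fintype.card ι : ℝ) • 1 - of 1) {c : ℂ}
    (hc : ‖c‖ = 1) (hre : (Fintype.card ι - 1) * c.re ^ 2 + 2 * c.re - 1 = 0) :
    IsCHadamard (S.ofSignPattern c) := by
  refine ⟨fun i j => ?_, ?_⟩
  · simp only [ofSignPattern, of_apply]
    split_ifs <;> simp [hc]
  rw [ofSignPattern_eq hdiag hoff]
  refine mul_conjTranspose_eq_card_smul_one ?_ ?_ ?_ hc hre
  · rw [← conjTranspose_map _ (fun _ => (Complex.conj_ofReal _).symm),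
      conjTranspose_eq_transpose_of_trivial, hS]
  · ext i j
    simpa [mul_apply] using congrArg ((↑) : ℝ → ℂ) (congrFun (congrFun hSJ i) j)
  · rw [hS] at hSS
    ext i j
    simpa [mul_apply, one_apply, apply_ite] using
      congrArg ((↑) : ℝ → ℂ) (congrFun (congrFun hSS i) j)

end Matrix

namespace IsConference

variable {n : ℕ} {C : Matrix (Fin (n + 1)) (Fin (n + 1)) ℝ}

theorem core_mul_of_one (hC : IsConference C) (hN : IsNormalizedConf C) :
    C.submatrix Fin.succ Fin.succ * of 1 = 0 := by
  refine mul_of_one_eq_zero_iff.2 fun i => ?_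
  have h := congrFun (congrFun hC.2.2 0) i.succ
  simp only [mul_apply, transpose_apply, Matrix.smul_apply, one_apply, Fin.sum_univ_succ, hC.1,
    zero_mul, zero_add, (Fin.succ_ne_zero i).symm, if_false, smul_zero] at h
  simpa [(hN _ (Fin.succ_ne_zero _)).1] using h

theorem core_mul_core_transpose (hC : IsConference C) (hN : IsNormalizedConf C) :
    C.submatrix Fin.succ Fin.succ * (C.submatrix Fin.succ Fin.succ)ᵀ = (n : ℝ) • 1 - of 1 := by
  ext i j
  have h := congrFun (congrFun hC.2.2 i.succ) j.succ
  simp only [mul_apply, transpose_apply, Matrix.smul_apply, one_apply, Fin.sum_univ_succ,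
    (hN _ (Fin.succ_ne_zero _)).2, Fin.succ_inj, smul_eq_mul] at h
  simp only [mul_apply, transpose_apply, submatrix_apply, Matrix.sub_apply, Matrix.smul_apply,
    one_apply, of_apply, Pi.one_apply, smul_eq_mul]
  push_cast at h
  split_ifs at h ⊢ <;> linarith

end IsConference

theorem mul_sq_add_two_mul_sub_one_eq_zero {k x ε : ℝ} (hk : k ≠ 0) (hk₁ : 0 ≤ k + 1)
    (hε : ε ^ 2 = 1) (hx : x = (-1 + ε * √(k + 1)) / k) : k * x ^ 2 + 2 * x - 1 = 0 := by
  have hlin : k * x + 1 = ε * √(k + 1) := by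
    rw [hx]
    field_simp
    ring
  have hsq : (k * x + 1) ^ 2 = k + 1 := by
    rw [hlin, mul_pow, hε, Real.sq_sqrt hk₁, one_mul]
  have : k * (k * x ^ 2 + 2 * x - 1) = 0 := by linear_combination hsq
  exact (mul_eq_zero.1 this).resolve_left hk

theorem stmt7 (m : ℕ) (hm : 1 ≤ m)
    (C : Matrix (Fin (4 * m + 2)) (Fin (4 * m + 2)) ℝ)
    (hconf : IsConference C) (hnorm : IsNormalizedConf C) (hsym : C.transpose = C)
    (ε : ℝ) (hε : ε = 1 ∨ ε = -1)
    (c : ℂ) (hcabs : ‖c‖ = 1)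
    (hcre : c.re = (-1 + ε * Real.sqrt (4 * m + 1)) / (4 * m)) :
    IsCHadamard (Matrix.of fun i j : Fin (4 * m + 1) =>
      if i = j then (1 : ℂ)
      else if C i.succ j.succ = 1 then c else (starRingEnd ℂ) c) := by
  have hm₀ : (4 * m : ℝ) ≠ 0 := by
    have : (0 : ℝ) < m := by exact_mod_cast hm
    positivity
  have hquad := mul_sq_add_two_mul_sub_one_eq_zero hm₀ (by positivity)
    (by rcases hε with rfl | rfl <;> norm_num) hcre
  refine Matrix.isCHadamard_ofSignPattern (S := C.submatrix Fin.succ Fin.succ)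
    (by rw [transpose_submatrix, hsym]) (fun i => hconf.1 _)
    (fun i j hij => hconf.2.1 _ _ (Fin.succ_injective _ |>.ne hij))
    (hconf.core_mul_of_one hnorm) ?_ hcabs ?_
  · simpa using hconf.core_mul_core_transpose hnorm
  · simpa using hquad
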